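/- Let G be a bidirected graph, let F be a sign-cut graph of G, and let u ∈ V(F). If u is not a tip in F, then there is a block of F having vertex-sides of opposite signs at u. -/

import Mathlib

/-!
Bidirected graphs.  A vertex-side is a vertex with a sign (`true` = `+`, `false` = `−`);
a bidirected edge is an unordered pair of vertex-sides (an element of `Sym2 (V × Bool)`).
-/

namespace Paper

variable {V : Type}

/-- A vertex-side: a vertex together with a sign (`true` = `+`, `false` = `−`). -/
abbrev Side (V : Type) := V × Bool

/-- A bidirected graph on the vertex type `V`: a vertex set together with a set of
bidirected edges, each an unordered pair of vertex-sides with endpoints in `verts`. -/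
structure BDGraph (V : Type) where
  verts : Set V
  E : Set (Sym2 (Side V))
  wf : ∀ e ∈ E, ∀ x ∈ e, Prod.fst x ∈ verts

namespace BDGraph

/-- `(u, α)` is a vertex-side of `G`, i.e. some edge of `G` is incident to `u`
with sign `α`. -/
def HasSide (G : BDGraph V) (u : V) (α : Bool) : Prop :=
  ∃ e ∈ G.E, (u, α) ∈ e

/-- Adjacency in the underlying undirected graph `U(G)` (signs ignored). -/
def uadj (G : BDGraph V) (a b : V) : Prop :=
  ∃ e ∈ G.E, ∃ σ τ : Bool, e = s((a, σ), (b, τ))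

/-- Connectivity (reachability) in the underlying undirected graph `U(G)`. -/
def uReach (G : BDGraph V) (a b : V) : Prop :=
  Relation.ReflTransGen G.uadj a b

/-- `v` is a tip of `G`: no two edges of `G` are incident to `v` with different signs. -/
def IsTip (G : BDGraph V) (v : V) : Prop :=
  ∀ e ∈ G.E, ∀ f ∈ G.E, ∀ σ : Bool, (v, σ) ∈ e → (v, !σ) ∈ f → False

/-- `v` is a tip of `G` with sign `α`: every edge of `G` incident to `v` carries the
sign `α` at `v`. -/
def IsTipWith (G : BDGraph V) (v : V) (α : Bool) : Prop :=
  ∀ e ∈ G.E, ∀ σ : Bool, (v, σ) ∈ e → σ = α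

/-- Deletion of the vertex `x` (and all edges incident to it). -/
def deleteVert (G : BDGraph V) (x : V) : BDGraph V where
  verts := G.verts \ {x}
  E := {e | e ∈ G.E ∧ ∀ y : Side V, y ∈ e → y.1 ≠ x}
  wf := by
    rintro e ⟨he, hne⟩ y hy
    exact ⟨G.wf e he y hy, hne y hy⟩

/-- Deletion of a single edge. -/
def deleteEdge (G : BDGraph V) (e₀ : Sym2 (Side V)) : BDGraph V where
  verts := G.verts
  E := G.E \ {e₀}
  wf := by
    rintro e ⟨he, -⟩ y hy
    exact G.wf e he y hy

/-- `x` is a cutvertex of (the underlying undirected graph of) `G`: some two other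
vertices are connected in `G` but no longer connected after deleting `x`. -/
def IsCutvertex (G : BDGraph V) (x : V) : Prop :=
  x ∈ G.verts ∧ ∃ a ∈ G.verts, ∃ b ∈ G.verts, a ≠ x ∧ b ≠ x ∧
    G.uReach a b ∧ ¬ (G.deleteVert x).uReach a b

/-- `G` is connected (underlying undirected graph, nonempty). -/
def Conn (G : BDGraph V) : Prop :=
  G.verts.Nonempty ∧ ∀ a ∈ G.verts, ∀ b ∈ G.verts, G.uReach a b

/-- `H` is a subgraph of `G`. -/
def IsSubgraphOf (H G : BDGraph V) : Prop :=
  H.verts ⊆ G.verts ∧ H.E ⊆ G.E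

end BDGraph

/-! ### Splitting a pair of vertex-sides

Splitting the vertex-side `u α` detaches all edges incident to `u` with the opposite
sign `!α` and reattaches them to a new vertex `u'`.  We split the two vertex-sides
`u α` and `v β` (`u ≠ v`) simultaneously, realising the two new vertices as `Sum.inr u`
and `Sum.inr v` in the vertex type `V ⊕ V` (original vertices are `Sum.inl`). -/

open Classical in
/-- Where each vertex-side goes under the splitting of `u α` and `v β`. -/
noncomputable def splitMap (u : V) (α : Bool) (v : V) (β : Bool) :
    Side V → Side (V ⊕ V) :=
  fun x =>
    if x = (u, !α) then (Sum.inr u, !α)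
    else if x = (v, !β) then (Sum.inr v, !β)
    else (Sum.inl x.1, x.2)

/-- The graph obtained from `G` by splitting the vertex-sides `u α` and `v β`. -/
noncomputable def BDGraph.split2 (G : BDGraph V) (u : V) (α : Bool) (v : V) (β : Bool) :
    BDGraph (V ⊕ V) where
  verts := (Sum.inl '' G.verts) ∪ {Sum.inr u, Sum.inr v}
  E := Sym2.map (splitMap u α v β) '' G.E
  wf := by
    rintro e ⟨f, hf, rfl⟩ x hx
    rw [Sym2.mem_map] at hx
    obtain ⟨y, hy, rfl⟩ := hx
    by_cases h1 : y = (u, !α)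
    · simp only [splitMap, if_pos h1]
      simp
    · by_cases h2 : y = (v, !β)
      · simp only [splitMap, if_neg h1, if_pos h2]
        simp
      · simp only [splitMap, if_neg h1, if_neg h2]
        exact Set.mem_union_left _ ⟨y.1, G.wf f hf y hy, rfl⟩

/-- The pair of vertex-sides `{u α, v β}` is separable in `G`: after splitting `u α`
and `v β`, there is a connected component containing `u` and `v` but neither of the
two new vertices `u'`, `v'`. -/
noncomputable def Separable (G : BDGraph V) (u : V) (α : Bool) (v : V) (β : Bool) : Prop :=
  u ≠ v ∧
    (G.split2 u α v β).uReach (Sum.inl u) (Sum.inl v) ∧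
    ¬ (G.split2 u α v β).uReach (Sum.inl u) (Sum.inr u) ∧
    ¬ (G.split2 u α v β).uReach (Sum.inl u) (Sum.inr v) ∧
    ¬ (G.split2 u α v β).uReach (Sum.inl v) (Sum.inr u) ∧
    ¬ (G.split2 u α v β).uReach (Sum.inl v) (Sum.inr v)

/-- The vertex set of the snarl component of `{u α, v β}`: the vertices of `G` lying in
the connected component of `u` after splitting `u α` and `v β`. -/
noncomputable def SnarlVerts (G : BDGraph V) (u : V) (α : Bool) (v : V) (β : Bool) :
    Set V :=
  {w | (G.split2 u α v β).uReach (Sum.inl u) (Sum.inl w)}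

/-- The edge set of the snarl component of `{u α, v β}`: the edges of `G` lying (after
splitting) in the connected component of `u`. -/
noncomputable def SnarlEdges (G : BDGraph V) (u : V) (α : Bool) (v : V) (β : Bool) :
    Set (Sym2 (Side V)) :=
  {e | e ∈ G.E ∧ ∀ y : Side V, y ∈ e →
      (G.split2 u α v β).uReach (Sum.inl u) (splitMap u α v β y).1}

/-- `{u α, v β}` is a snarl of `G`: separable, and minimal in the sense that the snarl
component `X` contains no vertex `w ∉ {u,v}` with vertex-sides `w γ`, `w !γ` such that
`{u α, w γ}` and `{w !γ, v β}` are both separable in `G`. -/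
noncomputable def IsSnarl (G : BDGraph V) (u : V) (α : Bool) (v : V) (β : Bool) : Prop :=
  Separable G u α v β ∧
    ¬ ∃ w ∈ SnarlVerts G u α v β, w ≠ u ∧ w ≠ v ∧
        ∃ γ : Bool, Separable G u α w γ ∧ Separable G w (!γ) v β

/-! ### Sign-consistent cutvertices and sign-cut graphs -/

/-- A cutvertex `x` of `G` is sign-consistent if `x` is a tip in `G[V(C) ∪ {x}]` for
every connected component `C` of `G − x` (components are described by a member `a`). -/
def BDGraph.SignConsistent (G : BDGraph V) (x : V) : Prop :=
  G.IsCutvertex x ∧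
    ∀ a ∈ (G.deleteVert x).verts,
      ∀ e ∈ G.E, ∀ f ∈ G.E,
        (∀ y : Side V, y ∈ e → y.1 = x ∨ (G.deleteVert x).uReach a y.1) →
        (∀ y : Side V, y ∈ f → y.1 = x ∨ (G.deleteVert x).uReach a y.1) →
        ∀ σ τ : Bool, (x, σ) ∈ e → (x, τ) ∈ f → σ = τ

open Classical in
/-- After splitting every sign-consistent vertex of `G` and relabelling, the two copies
of a sign-consistent vertex `x` are identified with the pairs `(x, true)`, `(x, false)`;
any other vertex `w` is identified with `(w, true)`.  `scKey G` sends a vertex-side to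
the copy of its vertex that it is attached to. -/
noncomputable def scKey (G : BDGraph V) : Side V → Side V :=
  fun x => if G.SignConsistent x.1 then x else (x.1, true)

lemma scKey_fst (G : BDGraph V) (y : Side V) : (scKey G y).1 = y.1 := by
  unfold scKey
  split <;> rfl

lemma scKey_idem (G : BDGraph V) (y : Side V) : scKey G (scKey G y) = scKey G y := by
  by_cases h : G.SignConsistent y.1
  · simp [scKey, h]
  · simp [scKey, h]

/-- The graph obtained from `G` by simultaneously splitting all sign-consistent
vertices (on the vertex type `V × Bool`, cf. `scKey`). -/
noncomputable def BDGraph.splitAll (G : BDGraph V) : BDGraph (Side V) where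
  verts := {p : Side V | p.1 ∈ G.verts ∧ scKey G p = p}
  E := Sym2.map (fun y : Side V => (scKey G y, y.2)) '' G.E
  wf := by
    rintro e ⟨f, hf, rfl⟩ x hx
    rw [Sym2.mem_map] at hx
    obtain ⟨y, hy, rfl⟩ := hx
    show (scKey G y).1 ∈ G.verts ∧ scKey G (scKey G y) = scKey G y
    exact ⟨by rw [scKey_fst]; exact G.wf f hf y hy, scKey_idem G y⟩

/-- `F` is a sign-cut graph of `G`: one of the graphs obtained by splitting every
sign-consistent vertex of `G` and relabelling each new vertex `y'` back to `y`;
concretely, the subgraph of `G` corresponding to a connected component of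
`G.splitAll`. -/
noncomputable def IsSignCutGraph (G F : BDGraph V) : Prop :=
  ∃ p ∈ G.splitAll.verts,
    F.verts = {w : V | ∃ σ : Bool, (w, σ) ∈ G.splitAll.verts ∧
                  G.splitAll.uReach p (w, σ)} ∧
    F.E = {e | e ∈ G.E ∧ ∀ y : Side V, y ∈ e → G.splitAll.uReach p (scKey G y)}

/-! ### Blocks -/

/-- `H` is a block of `G`: a maximal connected subgraph of `G` without a cutvertex. -/
def IsBlock (G H : BDGraph V) : Prop :=
  H.IsSubgraphOf G ∧ H.Conn ∧ (∀ x, ¬ H.IsCutvertex x) ∧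
    ∀ H' : BDGraph V, H'.IsSubgraphOf G → H.IsSubgraphOf H' → H'.Conn →
      (∀ x, ¬ H'.IsCutvertex x) → H'.verts = H.verts ∧ H'.E = H.E

/-- `H'` is a dangling block of `v` with respect to the block `H`:
a block of `G` different from `H` containing `v` with vertex-sides of opposite
signs at `v`. -/
def IsDanglingBlock (G H : BDGraph V) (v : V) (H' : BDGraph V) : Prop :=
  IsBlock G H' ∧ ¬ (H'.verts = H.verts ∧ H'.E = H.E) ∧ v ∈ H'.verts ∧
    H'.HasSide v true ∧ H'.HasSide v false

/-- `{u,v}` is a separation pair of `H`: some two other vertices of `H` are connected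
in `H` but no longer connected after removing `u` and `v`. -/
def IsSepPairB (H : BDGraph V) (u v : V) : Prop :=
  ∃ a ∈ H.verts, ∃ b ∈ H.verts, a ≠ u ∧ a ≠ v ∧ b ≠ u ∧ b ≠ v ∧
    H.uReach a b ∧ ¬ ((H.deleteVert u).deleteVert v).uReach a b

/-- `{u,v}` is a split pair of `H`: a separation pair of `H` or an edge of `H`. -/
def IsSplitPairB (H : BDGraph V) (u v : V) : Prop :=
  IsSepPairB H u v ∨ ∃ e ∈ H.E, ∃ σ τ : Bool, e = s((u, σ), (v, τ))

/-! ### Bidirected walks, paths and cycloids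

A bidirected walk `{v₁ α₁, v₂ α̂₂}, {v₂ α₂, v₃ α̂₃}, …` is encoded by the list
`[(v₁, α₁), (v₂, α₂), …]` of its *departing* sides: the first entry `(v₁, α₁)` is the
side of `v₁` on the first edge, and for `i ≥ 2` the walk arrives at `vᵢ` with sign
`!αᵢ` and departs with sign `αᵢ` (so the sign alternates at every internal vertex). -/

/-- One step of a bidirected walk, between consecutive departing sides. -/
def BStep (G : BDGraph V) (x y : Side V) : Prop :=
  s(x, (y.1, !y.2)) ∈ G.E

/-- `p` encodes a bidirected walk of `G` (at least one edge). -/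
def IsBWalk (G : BDGraph V) (p : List (Side V)) : Prop :=
  2 ≤ p.length ∧ p.Chain' (BStep G)

/-- `p` encodes a `u α`-`v β` bidirected path of `G`: a bidirected walk without
repeated vertices which starts at `u` with sign `α` and arrives at `v` with sign `β`
(so the last departing side recorded is `(v, !β)`). -/
def IsBPath (G : BDGraph V) (p : List (Side V)) (u : V) (α : Bool) (v : V) (β : Bool) :
    Prop :=
  IsBWalk G p ∧ p.head? = some (u, α) ∧ p.getLast? = some (v, !β) ∧
    (p.map Prod.fst).Nodup

/-- `G` has a cycloid: a closed bidirected walk through pairwise distinct vertices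
whose sign alternates at every vertex, except possibly at one (exceptional) vertex,
which we may take to be the starting vertex.  The closing edge either alternates at
the start vertex (`s(y, (x.1, !x.2))`) or fails to alternate there (`s(y, x)`). -/
def HasCycloid (G : BDGraph V) : Prop :=
  ∃ p : List (Side V), p ≠ [] ∧ (p.map Prod.fst).Nodup ∧ p.Chain' (BStep G) ∧
    ∃ x y : Side V, p.head? = some x ∧ p.getLast? = some y ∧
      (s(y, (x.1, !x.2)) ∈ G.E ∨ s(y, x) ∈ G.E)

/-- `G` has a cycloid with an exceptional vertex: exactly one vertex (the starting
one, after rotation) fails sign alternation. -/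
def HasExceptionalCycloid (G : BDGraph V) : Prop :=
  ∃ p : List (Side V), p ≠ [] ∧ (p.map Prod.fst).Nodup ∧ p.Chain' (BStep G) ∧
    ∃ x y : Side V, p.head? = some x ∧ p.getLast? = some y ∧ s(y, x) ∈ G.E

/-! ### Flipping a vertex -/

open Classical in
/-- Flip the sign of every vertex-side of `u`. -/
noncomputable def flipSide (u : V) : Side V → Side V :=
  fun x => if x.1 = u then (x.1, !x.2) else x

/-- The graph obtained from `G` by flipping the vertex `u` (every positive vertex-side
of `u` becomes negative and vice versa). -/
noncomputable def BDGraph.flip (G : BDGraph V) (u : V) : BDGraph V where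
  verts := G.verts
  E := Sym2.map (flipSide u) '' G.E
  wf := by
    rintro e ⟨f, hf, rfl⟩ x hx
    rw [Sym2.mem_map] at hx
    obtain ⟨y, hy, rfl⟩ := hx
    have h1 : (flipSide u y).1 = y.1 := by
      unfold flipSide
      split <;> rfl
    rw [h1]
    exact G.wf f hf y hy

/-!
Both signs occur at `u` in `F`, so if `u` were sign-consistent its two copies in `G.splitAll`
would be connected, which they are not. Hence `u` is not sign-consistent, and `G` has edges at `u`
of opposite signs whose other ends are `u` itself or are connected in `G - u`. These edges lie in
`F`. A path between their ends in `G - u` closes up to a cycle through `u`; every vertex `c ≠ u`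
of the cycle sees both of its cycle edges inside the component of `G - c` containing `u`, so the
cycle never switches copies at a sign-consistent vertex and lies in `F` as well. The cycle
(degenerately a loop or a digon) spans a nonseparable subgraph of `F` with both signs at `u`, and
Zorn's lemma enlarges it to a block.
-/

namespace BDGraph

variable {G H : BDGraph V} {a b c u x : V} {l : List V}

/-- `H ≤ G` unfolds to `H.IsSubgraphOf G`. -/
instance : PartialOrder (BDGraph V) :=
  PartialOrder.lift (fun H => (H.verts, H.E)) fun H H' h => by
    cases H; cases H'; cases h; rfl

theorem deleteVert_le (G : BDGraph V) (x : V) : G.deleteVert x ≤ G :=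
  ⟨Set.sdiff_subset, fun _ he => he.1⟩

theorem deleteVert_mono (hle : G ≤ H) : G.deleteVert x ≤ H.deleteVert x :=
  ⟨fun _ hv => ⟨hle.1 hv.1, hv.2⟩, fun _ he => ⟨hle.2 he.1, he.2⟩⟩

theorem uadj.symm (h : G.uadj a b) : G.uadj b a := by
  obtain ⟨e, he, σ, τ, rfl⟩ := h
  exact ⟨_, he, τ, σ, Sym2.eq_swap⟩

theorem uadj.mono (hE : G.E ⊆ H.E) (h : G.uadj a b) : H.uadj a b :=
  let ⟨e, he, σ, τ, hst⟩ := h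
  ⟨e, hE he, σ, τ, hst⟩

theorem uadj.deleteVert (h : G.uadj a b) (ha : a ≠ x) (hb : b ≠ x) :
    (G.deleteVert x).uadj a b := by
  obtain ⟨e, he, σ, τ, rfl⟩ := h
  refine ⟨_, ⟨he, fun y hy => ?_⟩, σ, τ, rfl⟩
  rcases Sym2.mem_iff.1 hy with rfl | rfl <;> assumption

theorem uReach.symm (h : G.uReach a b) : G.uReach b a := by
  induction h with
  | refl => exact .refl
  | tail _ hbc ih => exact .head hbc.symm ih

theorem uReach.mono (hE : G.E ⊆ H.E) (h : G.uReach a b) : H.uReach a b :=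
  Relation.ReflTransGen.mono (fun _ _ => uadj.mono hE) _ _ h

theorem uReach.mem_verts (h : G.uReach a b) (ha : a ∈ G.verts) : b ∈ G.verts := by
  induction h with
  | refl => exact ha
  | tail _ hbc _ =>
    obtain ⟨e, he, σ, τ, rfl⟩ := hbc
    exact G.wf _ he _ (Sym2.mem_mk_right _ _)

theorem uReach_of_mem_of_isChain (hl : l.IsChain G.uadj) (ha : a ∈ l) (hb : b ∈ l) :
    G.uReach a b := by
  obtain _ | ⟨c, t⟩ := l
  · simp at ha
  have hc : ∀ v ∈ c :: t, G.uReach c v :=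
    hl.induction (G.uReach c) _ (fun _ _ h hc => hc.tail h) fun _ => .refl
  exact (hc a ha).symm.trans (hc b hb)

theorem isChain_deleteVert (hl : l.IsChain G.uadj) (hx : x ∉ l) :
    l.IsChain (G.deleteVert x).uadj :=
  hl.imp_of_mem_imp fun _ _ ha hb h =>
    h.deleteVert (ne_of_mem_of_not_mem ha hx) (ne_of_mem_of_not_mem hb hx)

theorem exists_path_of_uReach (h : G.uReach a b) :
    ∃ l : List V, l.IsChain G.uadj ∧ l.Nodup ∧ l.head? = some a ∧ l.getLast? = some b := by
  classical
  obtain ⟨w⟩ : (SimpleGraph.fromRel G.uadj).Reachable a b := by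
    rw [SimpleGraph.reachable_iff_reflTransGen]
    induction h with
    | refl => exact .refl
    | @tail x y _ hxy ih =>
      by_cases hxy' : x = y
      · exact hxy' ▸ ih
      · exact ih.tail ⟨hxy', Or.inl hxy⟩
  refine ⟨w.toPath.1.support, ?_, w.toPath.2.support_nodup, ?_, ?_⟩
  · refine w.toPath.1.isChain_adj_support.imp fun x y hxy => ?_
    rcases hxy.2 with h | h
    exacts [h, h.symm]
  · rw [← SimpleGraph.Walk.cons_tail_support]; rfl
  · rw [List.getLast?_eq_some_getLast w.toPath.1.support_ne_nil,
      SimpleGraph.Walk.getLast_support]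

theorem exists_cycle_of_uReach_deleteVert (hua : G.uadj u a) (hub : G.uadj u b)
    (ha : a ∈ (G.deleteVert u).verts) (h : (G.deleteVert u).uReach a b) :
    ∃ l, (u :: l ++ [u]).IsChain G.uadj ∧ (u :: l).Nodup ∧ l.head? = some a ∧ b ∈ l := by
  obtain ⟨l, hch, hnd, hhd, hlast⟩ := exists_path_of_uReach h
  have hlu : u ∉ l := fun hu =>
    ((uReach_of_mem_of_isChain hch (List.mem_of_mem_head? hhd) hu).mem_verts ha).2 rfl
  refine ⟨l, ?_, List.nodup_cons.2 ⟨hlu, hnd⟩, hhd, List.mem_of_mem_getLast? hlast⟩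
  rw [List.cons_append, List.isChain_cons]
  refine ⟨fun y hy => ?_, (hch.imp fun _ _ h => h.mono (deleteVert_le G u).2).append
    (List.isChain_singleton u) fun x hx y hy => ?_⟩
  · rw [List.head?_append, hhd] at hy
    cases hy
    exact hua
  · rw [hlast] at hx
    cases hx
    cases hy
    exact hub.symm

theorem uReach_deleteVert_of_cycle (hch : (u :: l ++ [u]).IsChain G.uadj)
    (hnd : (u :: l).Nodup) (hc : c ∈ u :: l) (ha : a ∈ u :: l) (hb : b ∈ u :: l) (hac : a ≠ c)
    (hbc : b ≠ c) : (G.deleteVert c).uReach a b := by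
  obtain rfl | hcl := List.mem_cons.1 hc
  · have hl : l.IsChain (G.deleteVert c).uadj :=
      isChain_deleteVert (hch.infix ⟨[c], [c], rfl⟩) (List.nodup_cons.1 hnd).1
    exact uReach_of_mem_of_isChain hl ((List.mem_cons.1 ha).resolve_left hac)
      ((List.mem_cons.1 hb).resolve_left hbc)
  obtain ⟨l₁, l₂, rfl⟩ := List.append_of_mem hcl
  simp only [List.nodup_cons, List.nodup_append, List.mem_append] at hnd
  have hc₁ : c ∉ u :: l₁ := by grind
  have hc₂ : c ∉ l₂ ++ [u] := by grind
  -- the two arcs of the cycle between `c` and `u` avoid `c`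
  have hu : ∀ v ∈ u :: (l₁ ++ c :: l₂), v ≠ c → (G.deleteVert c).uReach v u := by
    intro v hv hvc
    rcases List.mem_append.1 (show v ∈ u :: l₁ ++ c :: l₂ from hv) with hv | hv
    · exact uReach_of_mem_of_isChain
        (isChain_deleteVert (hch.prefix ⟨c :: l₂ ++ [u], by simp⟩) hc₁) hv List.mem_cons_self
    · have hv : v ∈ l₂ ++ [u] := List.mem_append_left _ ((List.mem_cons.1 hv).resolve_left hvc)
      exact uReach_of_mem_of_isChain
        (isChain_deleteVert (hch.suffix ⟨u :: l₁ ++ [c], by simp⟩) hc₂) hv (by simp)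
  exact (hu a ha hac).trans (hu b hb hbc).symm

def IsNonseparable (H : BDGraph V) : Prop :=
  H.Conn ∧ ∀ x, ¬ H.IsCutvertex x

section Union

variable {s : Set (BDGraph V)}

def sUnion (s : Set (BDGraph V)) : BDGraph V where
  verts := ⋃ H ∈ s, H.verts
  E := ⋃ H ∈ s, H.E
  wf e he y hy := by
    obtain ⟨H, hH, heH⟩ := Set.mem_iUnion₂.1 he
    exact Set.mem_iUnion₂.2 ⟨H, hH, H.wf e heH y hy⟩

theorem le_sUnion (hH : H ∈ s) : H ≤ sUnion s :=
  ⟨Set.subset_biUnion_of_mem (u := verts) hH, Set.subset_biUnion_of_mem (u := E) hH⟩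

theorem sUnion_le {F : BDGraph V} (h : ∀ H ∈ s, H ≤ F) : sUnion s ≤ F :=
  ⟨Set.iUnion₂_subset fun H hH => (h H hH).1, Set.iUnion₂_subset fun H hH => (h H hH).2⟩

theorem exists_uReach_of_uReach_sUnion (hs : DirectedOn (· ≤ ·) s)
    (ha : a ∈ (sUnion s).verts) (h : (sUnion s).uReach a b) :
    ∃ H ∈ s, a ∈ H.verts ∧ H.uReach a b := by
  induction h with
  | refl =>
    obtain ⟨H, hH, haH⟩ := Set.mem_iUnion₂.1 ha
    exact ⟨H, hH, haH, .refl⟩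
  | tail _ hbc ih =>
    obtain ⟨H₁, hH₁, haH₁, hr⟩ := ih
    obtain ⟨e, he, σ, τ, rfl⟩ := hbc
    obtain ⟨H₂, hH₂, heH₂⟩ := Set.mem_iUnion₂.1 he
    obtain ⟨H, hH, h₁, h₂⟩ := hs H₁ hH₁ H₂ hH₂
    exact ⟨H, hH, h₁.1 haH₁, (hr.mono h₁.2).tail ⟨_, h₂.2 heH₂, σ, τ, rfl⟩⟩

theorem isNonseparable_sUnion (hs : DirectedOn (· ≤ ·) s) (hne : s.Nonempty)
    (hsep : ∀ H ∈ s, H.IsNonseparable) : (sUnion s).IsNonseparable := by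
  obtain ⟨H₀, hH₀⟩ := hne
  refine ⟨⟨(hsep H₀ hH₀).1.1.mono (le_sUnion hH₀).1, fun a ha b hb => ?_⟩, ?_⟩
  · obtain ⟨H₁, hH₁, haH₁⟩ := Set.mem_iUnion₂.1 ha
    obtain ⟨H₂, hH₂, hbH₂⟩ := Set.mem_iUnion₂.1 hb
    obtain ⟨H, hH, h₁, h₂⟩ := hs H₁ hH₁ H₂ hH₂
    exact ((hsep H hH).1.2 a (h₁.1 haH₁) b (h₂.1 hbH₂)).mono (le_sUnion hH).2
  · rintro x ⟨hx, a, ha, b, -, hax, hbx, hr, hnr⟩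
    obtain ⟨H₁, hH₁, haH₁, hr₁⟩ := exists_uReach_of_uReach_sUnion hs ha hr
    obtain ⟨H₂, hH₂, hxH₂⟩ := Set.mem_iUnion₂.1 hx
    obtain ⟨H, hH, h₁, h₂⟩ := hs H₁ hH₁ H₂ hH₂
    exact (hsep H hH).2 x ⟨h₂.1 hxH₂, a, h₁.1 haH₁, b, h₁.1 (hr₁.mem_verts haH₁), hax, hbx,
      hr₁.mono h₁.2, fun h => hnr (h.mono (deleteVert_mono (le_sUnion hH)).2)⟩

end Union

theorem exists_isBlock_ge {F : BDGraph V} (hle : H ≤ F) (hH : H.IsNonseparable) :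
    ∃ B, IsBlock F B ∧ H ≤ B := by
  obtain ⟨B, hHB, hB, hmax⟩ := zorn_le_nonempty₀ {K | K ≤ F ∧ K.IsNonseparable}
    (fun s hs hchain K hK => ⟨sUnion s, ⟨sUnion_le fun H hH => (hs hH).1,
      isNonseparable_sUnion hchain.directedOn ⟨K, hK⟩ fun H hH => (hs hH).2⟩,
      fun _ => le_sUnion⟩) H ⟨hle, hH⟩
  refine ⟨B, ⟨hB.1, hB.2.1, hB.2.2, fun H' hH'F hBH' hconn hcut => ?_⟩, hHB⟩
  have := le_antisymm (hmax ⟨hH'F, hconn, hcut⟩ hBH') hBH'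
  exact ⟨congrArg verts this, congrArg E this⟩

def induce (G : BDGraph V) (S : Set V) : BDGraph V where
  verts := S
  E := {e | e ∈ G.E ∧ ∀ y : Side V, y ∈ e → y.1 ∈ S}
  wf _ he y hy := he.2 y hy

theorem induce_le {S : Set V} (hS : S ⊆ G.verts) : G.induce S ≤ G :=
  ⟨hS, fun _ he => he.1⟩

theorem uadj.induce {S : Set V} (h : G.uadj a b) (ha : a ∈ S) (hb : b ∈ S) :
    (G.induce S).uadj a b := by
  obtain ⟨e, he, σ, τ, rfl⟩ := h
  refine ⟨_, ⟨he, fun y hy => ?_⟩, σ, τ, rfl⟩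
  rcases Sym2.mem_iff.1 hy with rfl | rfl <;> assumption

theorem isNonseparable_of_cycle (hverts : H.verts = {v | v ∈ u :: l})
    (hch : (u :: l ++ [u]).IsChain H.uadj) (hnd : (u :: l).Nodup) : H.IsNonseparable := by
  refine ⟨⟨⟨u, hverts ▸ List.mem_cons_self⟩, fun a ha b hb => ?_⟩, ?_⟩
  · rw [hverts] at ha hb
    exact uReach_of_mem_of_isChain hch (List.mem_append_left _ ha) (List.mem_append_left _ hb)
  · rintro x ⟨hx, a, ha, b, hb, hax, hbx, -, hnr⟩
    rw [hverts] at hx ha hb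
    exact hnr (uReach_deleteVert_of_cycle hch hnd hx ha hb hax hbx)

theorem exists_isBlock_of_cycle {F : BDGraph V} {δ : Bool} {y z : Side V}
    (hch : (u :: l ++ [u]).IsChain F.uadj) (hnd : (u :: l).Nodup) (he : s((u, δ), y) ∈ F.E)
    (hf : s((u, !δ), z) ∈ F.E) (hy : y.1 ∈ u :: l) (hz : z.1 ∈ u :: l) :
    ∃ B, IsBlock F B ∧ B.HasSide u true ∧ B.HasSide u false := by
  have hmem : ∀ v ∈ u :: l ++ [u], v ∈ u :: l := by simp [or_comm]
  have hS : {v | v ∈ u :: l} ⊆ F.verts := fun v hv =>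
    (uReach_of_mem_of_isChain hch (by simp) (List.mem_append_left _ hv)).mem_verts
      (F.wf _ he _ (Sym2.mem_mk_left _ _))
  obtain ⟨B, hB, hle⟩ := exists_isBlock_ge (induce_le hS) (isNonseparable_of_cycle rfl
    (hch.imp_of_mem_imp fun a b ha hb h => h.induce (hmem a ha) (hmem b hb)) hnd)
  have hside : ∀ σ (t : Side V), s((u, σ), t) ∈ F.E → t.1 ∈ u :: l → B.HasSide u σ :=
    fun σ t ht htl => ⟨_, hle.2 ⟨ht, fun x hx => by
      rcases Sym2.mem_iff.1 hx with rfl | rfl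
      exacts [List.mem_cons_self, htl]⟩, Sym2.mem_mk_left _ _⟩
  cases δ
  · exact ⟨B, hB, hside _ _ hf hz, hside _ _ he hy⟩
  · exact ⟨B, hB, hside _ _ he hy, hside _ _ hf hz⟩

theorem exists_isBlock_of_opposite_edges {F : BDGraph V} {δ : Bool} {y z : Side V}
    (he : s((u, δ), y) ∈ F.E) (hf : s((u, !δ), z) ∈ F.E)
    (hyz : y.1 ≠ u → z.1 ≠ u → (F.deleteVert u).uReach y.1 z.1) :
    ∃ B, IsBlock F B ∧ B.HasSide u true ∧ B.HasSide u false := by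
  have huy : F.uadj u y.1 := ⟨_, he, δ, y.2, rfl⟩
  have huz : F.uadj u z.1 := ⟨_, hf, !δ, z.2, rfl⟩
  have hyv : y.1 ∈ F.verts := F.wf _ he y (Sym2.mem_mk_right _ _)
  have hzv : z.1 ∈ F.verts := F.wf _ hf z (Sym2.mem_mk_right _ _)
  obtain ⟨l, hch, hnd, hy, hz⟩ : ∃ l, (u :: l ++ [u]).IsChain F.uadj ∧ (u :: l).Nodup ∧
      y.1 ∈ u :: l ∧ z.1 ∈ u :: l := by
    by_cases hyu : y.1 = u <;> by_cases hzu : z.1 = u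
    · exact ⟨[], List.isChain_pair.2 (hyu ▸ huy), List.nodup_singleton u, by simp [hyu],
        by simp [hzu]⟩
    · obtain ⟨l, hch, hnd, -, hzl⟩ := exists_cycle_of_uReach_deleteVert huz huz ⟨hzv, hzu⟩ .refl
      exact ⟨l, hch, hnd, hyu ▸ List.mem_cons_self, List.mem_cons_of_mem _ hzl⟩
    · obtain ⟨l, hch, hnd, -, hyl⟩ := exists_cycle_of_uReach_deleteVert huy huy ⟨hyv, hyu⟩ .refl
      exact ⟨l, hch, hnd, List.mem_cons_of_mem _ hyl, hzu ▸ List.mem_cons_self⟩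
    · obtain ⟨l, hch, hnd, hhd, hzl⟩ :=
        exists_cycle_of_uReach_deleteVert huy huz ⟨hyv, hyu⟩ (hyz hyu hzu)
      exact ⟨l, hch, hnd, List.mem_cons_of_mem _ (List.mem_of_mem_head? hhd),
        List.mem_cons_of_mem _ hzl⟩
  exact exists_isBlock_of_cycle hch hnd he hf hy hz

/-- `g` is an edge of `G[V(C) ∪ {c}]`, where `C` is the component of `G - c` containing `a`. -/
def IsComponentEdge (G : BDGraph V) (c a : V) (g : Sym2 (Side V)) : Prop :=
  ∀ y : Side V, y ∈ g → y.1 = c ∨ (G.deleteVert c).uReach a y.1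

theorem IsComponentEdge.of_uReach {g : Sym2 (Side V)} (h : (G.deleteVert c).uReach a b)
    (hg : G.IsComponentEdge c b g) : G.IsComponentEdge c a g :=
  fun y hy => (hg y hy).imp_right h.trans

theorem isComponentEdge_of_cycle (hch : (u :: l ++ [u]).IsChain G.uadj) (hnd : (u :: l).Nodup)
    (hc : c ∈ l) (hb : b ∈ u :: l) (σ τ : Bool) : G.IsComponentEdge c u s((c, σ), (b, τ)) := by
  intro x hx
  rcases Sym2.mem_iff.1 hx with rfl | rfl
  · exact Or.inl rfl
  · have hcu : u ≠ c := (ne_of_mem_of_not_mem hc (List.nodup_cons.1 hnd).1).symm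
    exact (eq_or_ne b c).imp id fun hbc => uReach_deleteVert_of_cycle hch hnd
      (List.mem_cons_of_mem _ hc) List.mem_cons_self hb hcu hbc

theorem scKey_of_signConsistent {y : Side V} (h : G.SignConsistent y.1) : scKey G y = y := by
  simp [scKey, h]

theorem scKey_of_not_signConsistent {y : Side V} (h : ¬ G.SignConsistent y.1) :
    scKey G y = (y.1, true) := by
  simp [scKey, h]

theorem scKey_eq_of_isComponentEdge {g g' : Sym2 (Side V)} {σ τ : Bool} (ha : a ∈ G.verts)
    (hac : a ≠ c) (hg : g ∈ G.E) (hg' : g' ∈ G.E) (hcg : G.IsComponentEdge c a g)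
    (hcg' : G.IsComponentEdge c a g') (hσ : (c, σ) ∈ g) (hτ : (c, τ) ∈ g') :
    scKey G (c, σ) = scKey G (c, τ) := by
  by_cases hsc : G.SignConsistent c
  · rw [scKey_of_signConsistent hsc, scKey_of_signConsistent hsc,
      hsc.2 a ⟨ha, hac⟩ g hg g' hg' hcg hcg' σ τ hσ hτ]
  · rw [scKey_of_not_signConsistent hsc, scKey_of_not_signConsistent hsc]

theorem splitAll_uadj {y z : Side V} (h : s(y, z) ∈ G.E) :
    G.splitAll.uadj (scKey G y) (scKey G z) :=
  ⟨_, ⟨_, h, rfl⟩, y.2, z.2, rfl⟩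

theorem exists_of_splitAll_uadj {p q : Side V} (h : G.splitAll.uadj p q) :
    ∃ y z, s(y, z) ∈ G.E ∧ scKey G y = p ∧ scKey G z = q := by
  obtain ⟨_, ⟨g, hg, rfl⟩, σ, τ, heq⟩ := h
  induction g using Sym2.ind with
  | _ y z =>
    rcases Sym2.eq_iff.1 heq with ⟨h₁, h₂⟩ | ⟨h₁, h₂⟩
    · exact ⟨y, z, hg, congrArg Prod.fst h₁, congrArg Prod.fst h₂⟩
    · exact ⟨z, y, Sym2.eq_swap ▸ hg, congrArg Prod.fst h₂, congrArg Prod.fst h₁⟩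

def OnPositiveSide (G : BDGraph V) (u : V) (q : Side V) : Prop :=
  q = (u, true) ∨ q.1 ≠ u ∧ ∃ g ∈ G.E, (u, true) ∈ g ∧ G.IsComponentEdge u q.1 g

theorem exists_isComponentEdge_of_onPositiveSide {y z : Side V} (hsc : G.SignConsistent u)
    (hyz : s(y, z) ∈ G.E) (hy : G.OnPositiveSide u (scKey G y)) :
    ∃ a ∈ G.verts, a ≠ u ∧ ∃ g ∈ G.E, (u, true) ∈ g ∧
      G.IsComponentEdge u a g ∧ G.IsComponentEdge u a s(y, z) := by
  have hyzv : ∀ x ∈ s(y, z), x.1 ∈ G.verts := G.wf _ hyz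
  rcases hy with hy | ⟨hyu, g, hg, hug, hgy⟩
  · have hyu : y.1 = u := by rw [← scKey_fst G y, hy]
    rw [scKey_of_signConsistent (hyu ▸ hsc)] at hy
    subst hy
    have hloop : ∀ x ∈ s((u, true), z), x.1 = u ∨ x = z := fun x hx =>
      (Sym2.mem_iff.1 hx).imp_left fun h => by rw [h]
    by_cases hzu : z.1 = u
    · obtain ⟨-, a₀, ha₀, -, -, ha₀u, -⟩ := hsc.1
      have hc : G.IsComponentEdge u a₀ s((u, true), z) := fun x hx =>
        Or.inl ((hloop x hx).elim id fun h => by rw [h, hzu])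
      exact ⟨a₀, ha₀, ha₀u, _, hyz, Sym2.mem_mk_left _ _, hc, hc⟩
    · have hc : G.IsComponentEdge u z.1 s((u, true), z) := fun x hx =>
        (hloop x hx).imp_right fun h => by rw [h]; exact .refl
      exact ⟨z.1, hyzv z (Sym2.mem_mk_right _ _), hzu, _, hyz, Sym2.mem_mk_left _ _, hc, hc⟩
  · rw [scKey_fst] at hyu hgy
    refine ⟨y.1, hyzv y (Sym2.mem_mk_left _ _), hyu, g, hg, hug, hgy, fun x hx => ?_⟩
    rcases Sym2.mem_iff.1 hx with rfl | rfl
    · exact Or.inr .refl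
    · by_cases hxu : x.1 = u
      · exact Or.inl hxu
      · exact Or.inr (.single (uadj.deleteVert ⟨_, hyz, y.2, x.2, rfl⟩ hyu hxu))

theorem SignConsistent.onPositiveSide_of_uadj {y z : Side V} (hsc : G.SignConsistent u)
    (hyz : s(y, z) ∈ G.E) (hy : G.OnPositiveSide u (scKey G y)) :
    G.OnPositiveSide u (scKey G z) := by
  obtain ⟨a, ha, hau, g, hg, hug, hga, hyza⟩ :=
    exists_isComponentEdge_of_onPositiveSide hsc hyz hy
  by_cases hzu : z.1 = u
  · left
    rw [scKey_of_signConsistent (hzu ▸ hsc)]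
    have := hsc.2 a ⟨ha, hau⟩ g hg _ hyz hga hyza true z.2 hug (hzu ▸ Sym2.mem_mk_right y z)
    exact Prod.ext hzu this.symm
  · refine Or.inr ⟨by rwa [scKey_fst], g, hg, hug, ?_⟩
    rw [scKey_fst]
    exact hga.of_uReach ((hyza z (Sym2.mem_mk_right y z)).resolve_left hzu).symm

theorem SignConsistent.not_splitAll_uReach (hsc : G.SignConsistent u) :
    ¬ G.splitAll.uReach (u, true) (u, false) := by
  suffices ∀ q, G.splitAll.uReach (u, true) q → G.OnPositiveSide u q by
    rintro h
    rcases this _ h with h | ⟨h, -⟩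
    · simp at h
    · exact h rfl
  intro q hq
  induction hq with
  | refl => exact Or.inl rfl
  | tail _ hpq ih =>
    obtain ⟨y, z, hyz, rfl, rfl⟩ := exists_of_splitAll_uadj hpq
    exact hsc.onPositiveSide_of_uadj hyz ih

theorem exists_of_not_isTip (h : ¬ G.IsTip u) :
    ∃ e ∈ G.E, ∃ f ∈ G.E, ∃ σ : Bool, (u, σ) ∈ e ∧ (u, !σ) ∈ f := by
  simpa only [IsTip, not_forall, exists_prop, imp_false, not_not] using h

theorem exists_opposite_edges_of_not_signConsistent (hu : u ∈ G.verts) (hnt : ¬ G.IsTip u)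
    (hsc : ¬ G.SignConsistent u) :
    ∃ δ y z, s((u, δ), y) ∈ G.E ∧ s((u, !δ), z) ∈ G.E ∧
      (y.1 ≠ u → z.1 ≠ u → (G.deleteVert u).uReach y.1 z.1) := by
  rw [SignConsistent, not_and_or] at hsc
  rcases hsc with hcut | hcomp
  · obtain ⟨e, he, f, hf, σ, hue, huf⟩ := exists_of_not_isTip hnt
    obtain ⟨y, rfl⟩ := Sym2.mem_iff_exists.1 hue
    obtain ⟨z, rfl⟩ := Sym2.mem_iff_exists.1 huf
    refine ⟨σ, y, z, he, hf, fun hyu hzu => ?_⟩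
    by_contra hr
    exact hcut ⟨hu, y.1, G.wf _ he _ (Sym2.mem_mk_right _ _), z.1,
      G.wf _ hf _ (Sym2.mem_mk_right _ _), hyu, hzu,
      .head (uadj.symm ⟨_, he, σ, y.2, rfl⟩) (.single ⟨_, hf, !σ, z.2, rfl⟩), hr⟩
  · push Not at hcomp
    obtain ⟨a, -, e, he, f, hf, hce, hcf, σ, τ, hue, huf, hστ⟩ := hcomp
    obtain rfl : τ = !σ := by cases σ <;> cases τ <;> simp_all
    obtain ⟨y, rfl⟩ := Sym2.mem_iff_exists.1 hue
    obtain ⟨z, rfl⟩ := Sym2.mem_iff_exists.1 huf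
    refine ⟨σ, y, z, he, hf, fun hyu hzu => ?_⟩
    exact ((hce y (Sym2.mem_mk_right _ _)).resolve_left hyu).symm.trans
      ((hcf z (Sym2.mem_mk_right _ _)).resolve_left hzu)

/-- The edge set of the sign-cut graph containing the copy `p`, as in `IsSignCutGraph`. -/
def signCutEdges (G : BDGraph V) (p : Side V) : Set (Sym2 (Side V)) :=
  {e | e ∈ G.E ∧ ∀ y : Side V, y ∈ e → G.splitAll.uReach p (scKey G y)}

theorem mem_signCutEdges_of_uReach {p y z : Side V} (hg : s(y, z) ∈ G.E)
    (h : G.splitAll.uReach p (scKey G y)) : s(y, z) ∈ signCutEdges G p := by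
  refine ⟨hg, fun x hx => ?_⟩
  rcases Sym2.mem_iff.1 hx with rfl | rfl
  exacts [h, h.tail (splitAll_uadj hg)]

section SignCutGraph

variable {F : BDGraph V} {p : Side V}

theorem not_signConsistent_of_not_isTip (hFE : F.E = signCutEdges G p) (hnt : ¬ F.IsTip u) :
    ¬ G.SignConsistent u := by
  intro hsc
  obtain ⟨e, he, f, hf, σ, hue, huf⟩ := exists_of_not_isTip hnt
  rw [hFE] at he hf
  have h₁ := he.2 _ hue
  have h₂ := hf.2 _ huf
  rw [scKey_of_signConsistent hsc] at h₁ h₂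
  cases σ
  · exact hsc.not_splitAll_uReach (h₂.symm.trans h₁)
  · exact hsc.not_splitAll_uReach (h₁.symm.trans h₂)

theorem mem_signCutEdges_of_not_signConsistent {g : Sym2 (Side V)} {σ δ : Bool} {z : Side V}
    (hsc : ¬ G.SignConsistent u) (hg : g ∈ signCutEdges G p) (hug : (u, σ) ∈ g)
    (hz : s((u, δ), z) ∈ G.E) : s((u, δ), z) ∈ signCutEdges G p := by
  refine mem_signCutEdges_of_uReach hz ?_
  have := hg.2 _ hug
  rwa [scKey_of_not_signConsistent hsc] at this ⊢

theorem uReach_deleteVert_of_signCutEdges (hFE : F.E = signCutEdges G p) {w w' : V}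
    {γ γ' σ σ' : Bool} (he : s((u, γ), (w, σ)) ∈ F.E) (he' : s((u, γ'), (w', σ')) ∈ F.E)
    (hwu : w ≠ u) (h : (G.deleteVert u).uReach w w') : (F.deleteVert u).uReach w w' := by
  rw [hFE] at he he'
  obtain ⟨l, hch, hnd, hhd, hw'l⟩ := exists_cycle_of_uReach_deleteVert ⟨_, he.1, γ, σ, rfl⟩
    ⟨_, he'.1, γ', σ', rfl⟩ ⟨G.wf _ he.1 _ (Sym2.mem_mk_right _ _), hwu⟩ h
  have huG : u ∈ G.verts := G.wf _ he.1 _ (Sym2.mem_mk_left _ _)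
  have hul : u ∉ l := (List.nodup_cons.1 hnd).1
  have hwl : w ∈ l := List.mem_of_mem_head? hhd
  -- `Q v`: every edge at `v` on the side of `u` is attached to a copy of `v` in the component of
  -- `p`. Along the cycle, `Q` at one end of an edge puts the edge into `F`, which gives `Q` at the
  -- other end.
  let Q : V → Prop := fun v => ∀ g ∈ G.E, ∀ δ : Bool, (v, δ) ∈ g →
    G.IsComponentEdge v u g → G.splitAll.uReach p (scKey G (v, δ))
  have hF_of_Q : ∀ c ∈ l, Q c → ∀ d ∈ u :: l, ∀ a b : Bool, s((c, a), (d, b)) ∈ G.E →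
      s((c, a), (d, b)) ∈ signCutEdges G p := fun c hc hQ d hd a b hg =>
    mem_signCutEdges_of_uReach hg
      (hQ _ hg a (Sym2.mem_mk_left _ _) (isComponentEdge_of_cycle hch hnd hc hd a b))
  have hQ_of_F : ∀ d ∈ l, ∀ c ∈ u :: l, ∀ a b : Bool, s((c, a), (d, b)) ∈ signCutEdges G p →
      Q d := by
    intro d hd c hc a b hF g hg δ hδ hgu
    have hcd := isComponentEdge_of_cycle hch hnd hd hc b a
    rw [← Sym2.eq_swap] at hcd
    rw [scKey_eq_of_isComponentEdge huG (ne_of_mem_of_not_mem hd hul).symm hg hF.1 hgu hcd hδ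
      (Sym2.mem_mk_right _ _)]
    exact hF.2 _ (Sym2.mem_mk_right _ _)
  have hQ : ∀ v ∈ l, Q v := by
    refine (List.IsChain.iff_mem.1 (hch.infix ⟨[u], [u], rfl⟩)).induction Q l ?_ fun hne => ?_
    · rintro c d ⟨hc, hd, ⟨_, hg, a, b, rfl⟩⟩ hQc
      exact hQ_of_F d hd c (List.mem_cons_of_mem _ hc) a b
        (hF_of_Q c hc hQc d (List.mem_cons_of_mem _ hd) a b hg)
    · rw [List.head?_eq_some_head hne, Option.some_inj] at hhd
      exact hhd ▸ hQ_of_F w hwl u List.mem_cons_self γ σ he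
  have hchF : l.IsChain (F.deleteVert u).uadj := by
    refine (hch.infix ⟨[u], [u], rfl⟩).imp_of_mem_imp fun c d hc hd ⟨_, hg, a, b, hcd⟩ => ?_
    subst hcd
    refine uadj.deleteVert ⟨_, ?_, a, b, rfl⟩ (ne_of_mem_of_not_mem hc hul)
      (ne_of_mem_of_not_mem hd hul)
    rw [hFE]
    exact hF_of_Q c hc (hQ c hc) d (List.mem_cons_of_mem _ hd) a b hg
  exact uReach_of_mem_of_isChain hchF hwl hw'l

end SignCutGraph

end BDGraph

open BDGraph

theorem statement_8_general (G F : BDGraph V) (hF : IsSignCutGraph G F)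
    (u : V) (hnt : ¬ F.IsTip u) :
    ∃ H : BDGraph V, IsBlock F H ∧ H.HasSide u true ∧ H.HasSide u false := by
  obtain ⟨p, -, -, hFE⟩ := hF
  have hsc := not_signConsistent_of_not_isTip hFE hnt
  obtain ⟨e, he, f, hf, σ, hue, huf⟩ := exists_of_not_isTip hnt
  rw [hFE] at he hf
  obtain ⟨δ, y, z, hy, hz, hyz⟩ := exists_opposite_edges_of_not_signConsistent
    (G.wf _ he.1 _ hue) (fun h => h e he.1 f hf.1 σ hue huf) hsc
  have hyF : s((u, δ), y) ∈ F.E := hFE ▸ mem_signCutEdges_of_not_signConsistent hsc he hue hy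
  have hzF : s((u, !δ), z) ∈ F.E := hFE ▸ mem_signCutEdges_of_not_signConsistent hsc he hue hz
  exact exists_isBlock_of_opposite_edges hyF hzF fun hyu hzu =>
    uReach_deleteVert_of_signCutEdges hFE hyF hzF hyu (hyz hyu hzu)

/-- If `F` is a sign-cut graph of `G` and `u ∈ V(F)` is not a tip in
`F`, then some block of `F` has vertex-sides of opposite signs at `u`. -/
theorem statement_8 (G F : BDGraph V) (hF : IsSignCutGraph G F)
    (u : V) (hu : u ∈ F.verts) (hnt : ¬ F.IsTip u) :
    ∃ H : BDGraph V, IsBlock F H ∧ H.HasSide u true ∧ H.HasSide u false :=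
  statement_8_general G F hF u hnt

end Paper
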